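/- In the two-species competition chemostat with μ1 > D, μ2 > D, λ1 < λ2, and λ1 < S0, the exclusion equilibrium (λ1, Y1(S0 - λ1), 0) is linearly asymptotically stable: all eigenvalues of the Jacobian of the system at this point have negative real part. In particular the eigenvalue μ2 λ1/(K2 + λ1) - D in the X2-direction is negative. -/
import Mathlib

lemma quad_root_re_neg (p q : ℝ) (hp : 0 < p) (hq : 0 < q) (z : ℂ)
    (h : z ^ 2 + (p : ℂ) * z + (q : ℂ) = 0) : z.re < 0 := by
  have hre := congrArg Complex.re h
  have him := congrArg Complex.im h
  simp [pow_two, Complex.add_re, Complex.add_im, Complex.mul_re, Complex.mul_im] at hre him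
  set x := z.re
  set y := z.im
  have him' : y * (2 * x + p) = 0 := by nlinarith [him]
  rcases mul_eq_zero.mp him' with hy | hxp
  · by_contra hx
    push_neg at hx
    nlinarith [hre]
  · nlinarith

/-- In the two-species chemostat with μ1 > D, μ2 > D, λ1 < λ2 and λ1 < S0, all
eigenvalues of the Jacobian at the exclusion equilibrium (λ1, Y1(S0-λ1), 0) have
negative real part; in particular the X2-direction eigenvalue μ2 λ1/(K2+λ1) - D is
negative. The Jacobian at this point is the 3×3 matrix below (λ1 := K1 D/(μ1-D),
X1* := Y1(S0-λ1)). -/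
theorem exclusion_equilibrium_stable
    (D S0 Y1 Y2 μ1 μ2 K1 K2 : ℝ)
    (hD : 0 < D) (hS0 : 0 < S0) (hY1 : 0 < Y1) (hY2 : 0 < Y2)
    (hμ1 : 0 < μ1) (hμ2 : 0 < μ2) (hK1 : 0 < K1) (hK2 : 0 < K2)
    (hμ1D : D < μ1) (hμ2D : D < μ2)
    (hlt : K1 * D / (μ1 - D) < K2 * D / (μ2 - D))
    (hlam : K1 * D / (μ1 - D) < S0)
    (lam1 X1s : ℝ) (hlam1 : lam1 = K1 * D / (μ1 - D)) (hX1s : X1s = Y1 * (S0 - lam1))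
    (J : Matrix (Fin 3) (Fin 3) ℂ)
    (hJ : J = (!![(-D - (1 / Y1) * (μ1 * K1 * X1s / (K1 + lam1) ^ 2) : ℝ),
                 (-(1 / Y1) * (μ1 * lam1 / (K1 + lam1)) : ℝ),
                 (-(1 / Y2) * (μ2 * lam1 / (K2 + lam1)) : ℝ);
                 (μ1 * K1 * X1s / (K1 + lam1) ^ 2 : ℝ),
                 (μ1 * lam1 / (K1 + lam1) - D : ℝ), (0 : ℝ);
                 (0 : ℝ), (0 : ℝ), (μ2 * lam1 / (K2 + lam1) - D : ℝ)]).map Complex.ofReal) :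
    (∀ z : ℂ, (Matrix.charpoly J).eval z = 0 → z.re < 0) ∧
    μ2 * lam1 / (K2 + lam1) - D < 0 := by
  have hμ1D' : 0 < μ1 - D := by linarith
  have hμ2D' : 0 < μ2 - D := by linarith
  have hlam1pos : 0 < lam1 := by rw [hlam1]; positivity
  have hden1 : 0 < K1 + lam1 := by linarith
  have hden2 : 0 < K2 + lam1 := by linarith
  -- key identity μ1 lam1 / (K1+lam1) = D
  have hDkey : μ1 * lam1 / (K1 + lam1) = D := by
    rw [hlam1]
    field_simp
    ring
  -- X2-eigenvalue negative
  have hc : μ2 * lam1 / (K2 + lam1) - D < 0 := by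
    rw [sub_neg, div_lt_iff₀ hden2]
    have : lam1 < K2 * D / (μ2 - D) := hlam1 ▸ hlt
    rw [lt_div_iff₀ hμ2D'] at this
    nlinarith
  refine ⟨?_, hc⟩
  -- abbreviations
  set a : ℝ := μ1 * K1 * X1s / (K1 + lam1) ^ 2 with ha_def
  have hX1spos : 0 < X1s := by
    rw [hX1s]
    have : lam1 < S0 := hlam1 ▸ hlam
    nlinarith
  have ha : 0 < a := by rw [ha_def]; positivity
  set c : ℝ := μ2 * lam1 / (K2 + lam1) - D with hc_def
  set p : ℝ := D + a / Y1 with hp_def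
  set q : ℝ := a * D / Y1 with hq_def
  have hp : 0 < p := by rw [hp_def]; positivity
  have hq : 0 < q := by rw [hq_def]; positivity
  intro z hz
  -- compute charpoly eval
  have heval : (Matrix.charpoly J).eval z = (z - (c : ℂ)) * (z ^ 2 + (p : ℂ) * z + (q : ℂ)) := by
    have hDkeyC : (μ1 : ℂ) * (lam1 : ℂ) / ((K1 : ℂ) + (lam1 : ℂ)) = (D : ℂ) := by
      push_cast [← hDkey]; ring
    rw [Matrix.charpoly]
    have hmd : Polynomial.eval z (Matrix.charmatrix J).det
        = ((Matrix.charmatrix J).map (Polynomial.evalRingHom z)).det :=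
      RingHom.map_det (Polynomial.evalRingHom z) (Matrix.charmatrix J)
    rw [hmd, Matrix.det_fin_three]
    simp [hJ, Matrix.charmatrix_apply, Matrix.diagonal_apply]
    rw [hDkeyC]
    have hY1C : (Y1 : ℂ) ≠ 0 := by exact_mod_cast hY1.ne'
    have hY2C : (Y2 : ℂ) ≠ 0 := by exact_mod_cast hY2.ne'
    have hd1C : (K1 : ℂ) + lam1 ≠ 0 := by exact_mod_cast hden1.ne'
    have hd2C : (K2 : ℂ) + lam1 ≠ 0 := by exact_mod_cast hden2.ne'
    simp only [hc_def, hp_def, hq_def, ha_def]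
    push_cast
    field_simp
    ring
  rw [heval] at hz
  rcases mul_eq_zero.mp hz with h1 | h2
  · have : z = (c : ℂ) := by linear_combination h1
    rw [this, Complex.ofReal_re]
    exact hc
  · exact quad_root_re_neg p q hp hq z h2
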